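/- arXiv:2510.10377 — 2 statements merged into one kernel-verified Lean document; each statement's English description precedes it below -/
import Mathlib

section
/- Let R be a commutative ℚ-algebra and let H(t), E(t) ∈ R[[t]] have constant term 1 with H(t)·E(t) = 1. Then for every d ≥ 1, E_d = (-1)^d · det(M), where M is the d×d matrix with entries M_{i,j} = H_{1-i+j} (with the convention H_k = 0 for k < 0 and H_0 = 1). -/
/-!
Truncating power series to upper-triangular Toeplitz matrices `(f_{j-i})_{i,j ≤ d}` is
multiplicative, so `H * E = 1` makes the Toeplitz matrix of `E` the inverse of that of `H`.
The latter is unitriangular, hence its inverse is its adjugate, and the top-right entry `E_d`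
of the adjugate is the signed minor obtained by deleting the last row and the first column,
which is exactly `M`.
-/

open PowerSeries Finset

namespace PowerSeries

variable {R : Type*} [CommRing R]

noncomputable def toeplitz (f : R⟦X⟧) (n : ℕ) : Matrix (Fin n) (Fin n) R :=
  fun i j => if (i : ℕ) ≤ j then coeff ((j : ℕ) - i) f else 0

theorem toeplitz_mul (f g : R⟦X⟧) (n : ℕ) :
    toeplitz (f * g) n = toeplitz f n * toeplitz g n := by
  ext i j
  rw [Matrix.mul_apply]
  simp only [toeplitz]
  rw [Fin.sum_univ_eq_sum_range (fun k => (if (i : ℕ) ≤ k then coeff (k - i) f else 0) *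
    (if k ≤ (j : ℕ) then coeff ((j : ℕ) - k) g else 0)) n]
  have hvanish : ∀ k, k ∉ Ico (i : ℕ) (j + 1) →
      (if (i : ℕ) ≤ k then coeff (k - i) f else 0) *
        (if k ≤ (j : ℕ) then coeff ((j : ℕ) - k) g else 0) = 0 := by
    intro k hk
    rw [mem_Ico, Nat.lt_succ_iff, not_and_or] at hk
    rcases hk with hk | hk
    · rw [if_neg hk, zero_mul]
    · rw [if_neg hk, mul_zero]
  split_ifs with hij
  · have hsub : Ico (i : ℕ) (j + 1) ⊆ range n := by
      intro k hk; simp only [mem_Ico, mem_range] at hk ⊢; omega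
    rw [← sum_subset hsub fun k _ hk => hvanish k hk, sum_Ico_eq_sum_range, coeff_mul,
      Nat.sum_antidiagonal_eq_sum_range_succ (fun a b => coeff a f * coeff b g),
      show (j : ℕ) + 1 - i = j - i + 1 by omega]
    refine sum_congr rfl fun k hk => ?_
    rw [mem_range] at hk
    rw [if_pos (by omega), if_pos (by omega), Nat.add_sub_cancel_left,
      show (j : ℕ) - (i + k) = j - i - k by omega]
  · refine (sum_eq_zero fun k _ => hvanish k ?_).symm
    rw [mem_Ico]; omega

theorem toeplitz_one (n : ℕ) : toeplitz (1 : R⟦X⟧) n = 1 := by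
  ext i j
  simp only [toeplitz, coeff_one, Matrix.one_apply, Fin.ext_iff]
  split_ifs <;> first | rfl | omega

theorem det_toeplitz (f : R⟦X⟧) (n : ℕ) : (toeplitz f n).det = constantCoeff f ^ n := by
  rw [Matrix.det_of_isUpperTriangular (M := toeplitz f n) fun i j hji => if_neg (not_le.2 hji)]
  simp [toeplitz]

end PowerSeries

theorem coeff_E_eq_det_H_general
    (R : Type*) [CommRing R]
    (H E : PowerSeries R)
    (hH0 : PowerSeries.constantCoeff H = 1)
    (hHE : H * E = 1) :
    ∀ d : ℕ, 1 ≤ d →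
      PowerSeries.coeff d E =
        (-1 : R) ^ d *
          Matrix.det (fun i j : Fin d =>
            if (i : ℕ) ≤ (j : ℕ) + 1 then
              PowerSeries.coeff ((j : ℕ) + 1 - (i : ℕ)) H
            else 0) := by
  intro d _
  set A := toeplitz H (d + 1)
  have hdet : A.det = 1 := by rw [det_toeplitz, hH0, one_pow]
  have hE : toeplitz E (d + 1) = A.adjugate := by
    have hinv : A⁻¹ = toeplitz E (d + 1) :=
      Matrix.inv_eq_right_inv (by rw [← toeplitz_mul, hHE, toeplitz_one])
    rw [← hinv, Matrix.inv_def, hdet, Ring.inverse_one, one_smul]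
  calc coeff d E = toeplitz E (d + 1) 0 (Fin.last d) := by simp [toeplitz]
    _ = _ := by
      rw [hE, Matrix.adjugate_fin_succ_eq_det_submatrix, Fin.succAbove_last, Fin.succAbove_zero]
      simp only [Fin.val_last, Fin.val_zero, add_zero]
      rfl

theorem coeff_E_eq_det_H
    (R : Type*) [CommRing R] [Algebra ℚ R]
    (H E : PowerSeries R)
    (hH0 : PowerSeries.constantCoeff H = 1)
    (hE0 : PowerSeries.constantCoeff E = 1)
    (hHE : H * E = 1) :
    ∀ d : ℕ, 1 ≤ d →
      PowerSeries.coeff d E =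
        (-1 : R) ^ d *
          Matrix.det (fun i j : Fin d =>
            if (i : ℕ) ≤ (j : ℕ) + 1 then
              PowerSeries.coeff ((j : ℕ) + 1 - (i : ℕ)) H
            else 0) :=
  coeff_E_eq_det_H_general R H E hH0 hHE
end

section
/- Let R be a commutative ℚ-algebra, H(t) ∈ R[[t]] with constant term 1, and let P_d be defined by ∑_{k≥1} P_k t^k / k = log H(t) (formal logarithm). Then for every d ≥ 1, P_d = d · ∑_{λ ⊢ d} (-1)^{ℓ(λ)-1} · ((ℓ(λ)-1)! / ∏_i m_i(λ)!) · H_λ, where H_λ = ∏_j H_{λ_j}, the sum is over all partitions λ of d, ℓ(λ) is the number of parts, and m_i(λ) is the multiplicity of i. -/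
open PowerSeries Finset

/-- Formal logarithm of a power series (intended for series with constant term 1)
over a `ℚ`-algebra, defined coefficientwise by `log f = ∑ₙ (-1)^{n+1} (f-1)ⁿ/n`. -/
noncomputable def PowerSeries.logPS {R : Type*} [CommRing R] [Algebra ℚ R]
    (f : PowerSeries R) : PowerSeries R :=
  PowerSeries.mk fun d =>
    ∑ n ∈ Finset.Icc 1 d, (((-1 : ℚ) ^ (n + 1) / n)) • PowerSeries.coeff d ((f - 1) ^ n)

/-! The coefficient of `t^d` in `(H - 1)^n` is, by the multinomial theorem applied to the
truncation `∑_{1 ≤ i ≤ d} H_i t^i`, the sum over partitions `λ ⊢ d` with `n` parts of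
`(n! / ∏ m_i(λ)!) H_λ`, the multinomial coefficient counting the orderings of the parts.
Summing against `(-1)^{n+1}/n` and using `n!/n = (n-1)!` gives the formula. -/

namespace Multiset

theorem countPerms_mul_prod_factorial_count {α : Type*} [DecidableEq α] (m : Multiset α) :
    m.countPerms * ∏ i ∈ m.toFinset, (m.count i).factorial = (card m).factorial := by
  rw [countPerms, Finsupp.multinomial_eq, toFinsupp_support, mul_comm]
  simpa [toFinset_sum_count_eq] using Nat.multinomial_spec m.toFinset m.toFinsupp

end Multiset

namespace Nat.Partition

theorem card_parts_le {n : ℕ} (μ : n.Partition) : Multiset.card μ.parts ≤ n := by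
  simpa [μ.parts_sum] using
    Multiset.card_nsmul_le_sum (s := μ.parts) (a := 1) fun _ h => μ.parts_pos h

theorem card_parts_pos {n : ℕ} (hn : n ≠ 0) (μ : n.Partition) :
    0 < Multiset.card μ.parts := by
  rw [Multiset.card_pos]
  intro h
  exact hn (by simpa [h] using μ.parts_sum.symm)

theorem mem_Icc_of_mem_parts {n : ℕ} (μ : n.Partition) {i : ℕ} (hi : i ∈ μ.parts) :
    i ∈ Icc 1 n :=
  mem_Icc.2 ⟨μ.parts_pos hi, μ.le_of_mem_parts hi⟩

theorem countPerms_parts_eq {n : ℕ} (μ : n.Partition) :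
    (μ.parts.countPerms : ℚ) = (Multiset.card μ.parts).factorial /
      ∏ i ∈ Icc 1 n, ((μ.parts.count i).factorial : ℚ) := by
  have hsubset : μ.parts.toFinset ⊆ Icc 1 n :=
    fun i hi => μ.mem_Icc_of_mem_parts (Multiset.mem_toFinset.1 hi)
  rw [← prod_subset hsubset fun i _ hi => by
    simp [Multiset.count_eq_zero_of_notMem (Multiset.mem_toFinset.not.1 hi)]]
  rw [eq_div_iff (prod_ne_zero_iff.2 fun _ _ => by positivity)]
  exact_mod_cast μ.parts.countPerms_mul_prod_factorial_count

end Nat.Partition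

namespace PowerSeries

section CommSemiring

variable {R : Type*} [CommSemiring R]

theorem prod_map_monomial (k : Multiset ℕ) (a : ℕ → R) :
    (k.map fun i => monomial i (a i)).prod = monomial k.sum (k.map a).prod := by
  induction k using Multiset.induction_on with
  | empty => simp
  | cons i k ih => simp [ih, monomial_mul_monomial]

theorem coeff_pow_eq_of_coeff_eq {f g : R⟦X⟧} {d : ℕ} (h : ∀ i ≤ d, coeff i f = coeff i g)
    (n : ℕ) : coeff d (f ^ n) = coeff d (g ^ n) := by
  have htrunc : trunc (d + 1) f = trunc (d + 1) g := by
    ext i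
    simp only [coeff_trunc]
    split_ifs with hi
    exacts [h i (by omega), rfl]
  rw [← coeff_coe_trunc_of_lt (lt_add_one d), ← trunc_trunc_pow, htrunc, trunc_trunc_pow,
    coeff_coe_trunc_of_lt (lt_add_one d)]

theorem coeff_sum_monomial_pow (s : Finset ℕ) (a : ℕ → R) (n d : ℕ) :
    coeff d ((∑ i ∈ s, monomial i (a i)) ^ n) =
      ∑ k ∈ s.sym n with k.1.sum = d, k.1.countPerms • (k.1.map a).prod := by
  rw [Finset.sum_pow, map_sum, sum_filter]
  refine sum_congr rfl fun k _ => ?_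
  rw [← nsmul_eq_mul, map_nsmul, prod_map_monomial, coeff_monomial, smul_ite, smul_zero]
  simp only [eq_comm]

end CommSemiring

section CommRing

variable {R : Type*} [CommRing R]

theorem coeff_sub_constantCoeff_pow (G : R⟦X⟧) (n d : ℕ) :
    coeff d ((G - C (constantCoeff G)) ^ n) =
      ∑ μ : d.Partition with Multiset.card μ.parts = n,
        μ.parts.countPerms • (μ.parts.map fun k => coeff k G).prod := by
  have hG : ∀ i ≤ d, coeff i (G - C (constantCoeff G)) =
      coeff i (∑ j ∈ Icc 1 d, monomial j (coeff j G)) := by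
    intro i hi
    rcases Nat.eq_zero_or_pos i with rfl | hi0
    · simp [coeff_monomial]
    · simp [coeff_monomial, coeff_C, hi0.ne', hi]
  rw [coeff_pow_eq_of_coeff_eq hG, coeff_sum_monomial_pow]
  symm
  refine sum_bij (fun μ hμ => Sym.mk μ.parts (mem_filter.1 hμ).2) ?_ ?_ ?_ ?_
  · intro μ _
    simp only [mem_filter, mem_sym_iff, Sym.mem_mk, μ.parts_sum, and_true]
    exact fun i hi => μ.mem_Icc_of_mem_parts hi
  · intro μ _ ν _ h
    exact Nat.Partition.ext (congrArg Sym.toMultiset h)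
  · intro k hk
    simp only [mem_filter, mem_sym_iff, mem_Icc] at hk
    exact ⟨⟨k.1, fun hi => (hk.1 _ hi).1, hk.2⟩, by simp, rfl⟩
  · intro μ _
    rfl

theorem coeff_logPS_eq_sum_partitions [Algebra ℚ R] {H : R⟦X⟧}
    (hH : constantCoeff H = 1) {d : ℕ} (hd : d ≠ 0) :
    coeff d (logPS H) = ∑ μ : d.Partition,
      ((-1 : ℚ) ^ (Multiset.card μ.parts + 1) / Multiset.card μ.parts * μ.parts.countPerms) •
        (μ.parts.map fun k => coeff k H).prod := by
  have hH1 : H - 1 = H - C (constantCoeff H) := by rw [hH, map_one]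
  simp only [logPS, coeff_mk, hH1, coeff_sub_constantCoeff_pow, smul_sum]
  rw [← sum_fiberwise_of_maps_to (g := fun μ : d.Partition => Multiset.card μ.parts)
    fun μ _ => mem_Icc.2 ⟨μ.card_parts_pos hd, μ.card_parts_le⟩]
  refine sum_congr rfl fun n _ => sum_congr rfl fun μ hμ => ?_
  rw [(mem_filter.1 hμ).2, mul_smul, Nat.cast_smul_eq_nsmul]

end CommRing

end PowerSeries

theorem P_eq_sum_partitions_H
    (R : Type*) [CommRing R] [Algebra ℚ R]
    (H : PowerSeries R) (P : ℕ → R)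
    (hH0 : PowerSeries.constantCoeff H = 1)
    (hlog : (PowerSeries.mk fun k => if k = 0 then 0 else ((k : ℚ)⁻¹) • P k)
      = PowerSeries.logPS H) :
    ∀ d : ℕ, 1 ≤ d →
      P d = (d : ℚ) •
        ∑ μ : d.Partition,
          (((-1 : ℚ) ^ (Multiset.card μ.parts - 1) * (Multiset.card μ.parts - 1).factorial) /
              (∏ i ∈ Finset.Icc 1 d, ((μ.parts.count i).factorial : ℚ))) •
            (μ.parts.map fun k => PowerSeries.coeff k H).prod := by
  intro d hd
  have hd0 : d ≠ 0 := by omega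
  have hcoeff := congrArg (coeff d) hlog
  rw [coeff_mk, if_neg hd0, coeff_logPS_eq_sum_partitions hH0 hd0] at hcoeff
  rw [← smul_inv_smul₀ (Nat.cast_ne_zero.2 hd0 : (d : ℚ) ≠ 0) (P d), hcoeff]
  congr 1
  refine sum_congr rfl fun μ _ => ?_
  congr 1
  rw [μ.countPerms_parts_eq]
  obtain ⟨m, hm⟩ := Nat.exists_eq_succ_of_ne_zero (μ.card_parts_pos hd0).ne'
  rw [hm, Nat.factorial_succ, Nat.succ_sub_one, pow_succ, pow_succ]
  push_cast
  field_simp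
end
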